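/- Let Φ be a DSE of multiplicity n with support H = ⋃_i graph(φ_i) ⊆ E. Let A, B ⊆ X and let θ : C → D be a piece (a partial isomorphism with graph ⊆ H) with A ∩ C = ∅ and B ∩ D = ∅. Then there exists a piece θ_1 : S → T with S ⊆ A, T ⊆ (B ∪ D)^c and μ(S) ≥ (μ(A) − μ(B))/2 − ((n−1)/(2n))·μ(C). -/

import Mathlib

/-!
Build a maximal piece `θ₁ : S → T` greedily: run through the maps `φ_i` once, each time adding
all points of `A \ S` whose `φ_i`-image avoids `B ∪ D ∪ T`. Afterwards almost every `x` in
`A \ S` lies in exactly `n` domains and has each image `φ_i x` in `B ∪ D ∪ T`. Count these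
pairs from the target side: a point of `B ∪ T` lies in at most `n` images, and a point
`y = θ c ∈ D` in at most `n - 1` images of points of `A`, because `φ_i c = y` for some `i`
and `c ∈ C` is disjoint from `A`. Hence `n μ(A \ S) ≤ (n - 1) μ(C) + n (μ(B) + μ(S))`,
which rearranges to the claimed bound.
-/

open MeasureTheory
open scoped ENNReal

/-- A measure-preserving partial isomorphism with domain `A`, given by the restriction of
`f` to `A`, whose graph is contained in the equivalence relation `E` (an element of `[[E]]`). -/
def IsPartialIso {X : Type*} [MeasurableSpace X] (μ : Measure X) (E : Set (X × X))
    (A : Set X) (f : X → X) : Prop :=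
  MeasurableSet A ∧ Measurable f ∧ Set.InjOn f A ∧ MeasurableSet (f '' A) ∧
    (∀ x ∈ A, (x, f x) ∈ E) ∧
    ∀ s ⊆ A, MeasurableSet s → μ (f '' s) = μ s

namespace IsPartialIso

variable {X : Type*} [MeasurableSpace X] {μ : Measure X} {E : Set (X × X)}
  {A P : Set X} {f g : X → X}

theorem measurableSet (h : IsPartialIso μ E A f) : MeasurableSet A := h.1

theorem measurable (h : IsPartialIso μ E A f) : Measurable f := h.2.1

theorem injOn (h : IsPartialIso μ E A f) : Set.InjOn f A := h.2.2.1

theorem measurableSet_image_self (h : IsPartialIso μ E A f) : MeasurableSet (f '' A) :=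
  h.2.2.2.1

theorem mk_mem (h : IsPartialIso μ E A f) {x : X} (hx : x ∈ A) : (x, f x) ∈ E :=
  h.2.2.2.2.1 x hx

theorem measure_image_of_subset (h : IsPartialIso μ E A f) {s : Set X} (hsA : s ⊆ A)
    (hs : MeasurableSet s) : μ (f '' s) = μ s :=
  h.2.2.2.2.2 s hsA hs

theorem measure_image (h : IsPartialIso μ E A f) : μ (f '' A) = μ A :=
  h.measure_image_of_subset subset_rfl h.measurableSet

theorem measurableSet_image [StandardBorelSpace X] (h : IsPartialIso μ E A f) {s : Set X}
    (hsA : s ⊆ A) (hs : MeasurableSet s) : MeasurableSet (f '' s) :=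
  hs.image_of_measurable_injOn h.measurable (h.injOn.mono hsA)

theorem mono [StandardBorelSpace X] (h : IsPartialIso μ E A f) {s : Set X} (hsA : s ⊆ A)
    (hs : MeasurableSet s) : IsPartialIso μ E s f :=
  ⟨hs, h.measurable, h.injOn.mono hsA, h.measurableSet_image hsA hs,
    fun _ hx => h.mk_mem (hsA hx),
    fun _ hts ht => h.measure_image_of_subset (hts.trans hsA) ht⟩

theorem congr (h : IsPartialIso μ E A f) (hg : Measurable g) (hfg : Set.EqOn f g A) :
    IsPartialIso μ E A g := by
  obtain ⟨hA, -, hinj, himg, hE, hpres⟩ := h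
  refine ⟨hA, hg, hinj.congr hfg, hfg.image_eq ▸ himg, fun x hx => hfg hx ▸ hE x hx,
    fun s hsA hs => ?_⟩
  rw [← (hfg.mono hsA).image_eq]
  exact hpres s hsA hs

theorem union [StandardBorelSpace X] (hA : IsPartialIso μ E A f) (hP : IsPartialIso μ E P f)
    (hdom : Disjoint A P) (himg : Disjoint (f '' A) (f '' P)) :
    IsPartialIso μ E (A ∪ P) f := by
  refine ⟨hA.measurableSet.union hP.measurableSet, hA.measurable, ?_,
    Set.image_union f A P ▸ hA.measurableSet_image_self.union hP.measurableSet_image_self,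
    fun _ hx => hx.elim hA.mk_mem hP.mk_mem, fun s hs hsm => ?_⟩
  · refine (Set.injOn_union hdom).mpr ⟨hA.injOn, hP.injOn, ?_⟩
    rintro x hx y hy hxy
    exact Set.disjoint_left.mp himg ⟨x, hx, rfl⟩ ⟨y, hy, hxy.symm⟩
  have hsplit : s = s ∩ A ∪ s ∩ P := by
    rw [← Set.inter_union_distrib_left, Set.inter_eq_self_of_subset_left hs]
  have hsP : MeasurableSet (s ∩ P) := hsm.inter hP.measurableSet
  calc μ (f '' s) = μ (f '' (s ∩ A) ∪ f '' (s ∩ P)) := by rw [← Set.image_union, ← hsplit]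
    _ = μ (f '' (s ∩ A)) + μ (f '' (s ∩ P)) :=
      measure_union (himg.mono (Set.image_mono Set.inter_subset_right)
        (Set.image_mono Set.inter_subset_right)) (hP.measurableSet_image Set.inter_subset_right hsP)
    _ = μ (s ∩ A) + μ (s ∩ P) := by
      rw [hA.measure_image_of_subset Set.inter_subset_right (hsm.inter hA.measurableSet),
        hP.measure_image_of_subset Set.inter_subset_right hsP]
    _ = μ s := by
      rw [← measure_union (hdom.mono Set.inter_subset_right Set.inter_subset_right) hsP, ← hsplit]

end IsPartialIso

/-- A piece of the family `φ_i = f i : Adom i → X`: an element of `[[E]]` whose graph lies in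
`H = ⋃ i, graph φ_i`. -/
def IsPiece {X ι : Type*} [MeasurableSpace X] (μ : Measure X) (E : Set (X × X))
    (Adom : ι → Set X) (f : ι → X → X) (S : Set X) (θ : X → X) : Prop :=
  IsPartialIso μ E S θ ∧ ∀ x ∈ S, ∃ i, x ∈ Adom i ∧ f i x = θ x

section Greedy

variable {X ι : Type*} [MeasurableSpace X] [StandardBorelSpace X] {μ : Measure X}
  {E : Set (X × X)} {Adom : ι → Set X} {f : ι → X → X}

theorem IsPiece.piecewise {S P : Set X} {θ : X → X} [DecidablePred (· ∈ P)]
    (hθ : IsPiece μ E Adom f S θ) (i : ι) (hiso : IsPartialIso μ E (Adom i) (f i))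
    (hP : P ⊆ Adom i) (hPm : MeasurableSet P) (hdom : Disjoint S P)
    (himg : Disjoint (θ '' S) (f i '' P)) :
    IsPiece μ E Adom f (S ∪ P) (P.piecewise (f i) θ) := by
  have hθ' : Set.EqOn θ (P.piecewise (f i) θ) S := fun x hx =>
    (Set.piecewise_eq_of_notMem _ _ _ (Set.disjoint_left.mp hdom hx)).symm
  have hfi : Set.EqOn (f i) (P.piecewise (f i) θ) P := (Set.piecewise_eqOn _ _ _).symm
  have hmeas : Measurable (P.piecewise (f i) θ) := hiso.measurable.piecewise hPm hθ.1.measurable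
  refine ⟨(hθ.1.congr hmeas hθ').union ((hiso.mono hP hPm).congr hmeas hfi) hdom ?_, ?_⟩
  · rwa [← hθ'.image_eq, ← hfi.image_eq]
  rintro x (hx | hx)
  · obtain ⟨j, hxj, hj⟩ := hθ.2 x hx
    exact ⟨j, hxj, hj.trans (hθ' hx)⟩
  · exact ⟨i, hP hx, hfi hx⟩

theorem IsPiece.exists_extend {A Y S : Set X} {θ : X → X} (hA : MeasurableSet A)
    (hY : MeasurableSet Y) (hθ : IsPiece μ E Adom f S θ) (hSA : S ⊆ A) (hθY : θ '' S ⊆ Yᶜ)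
    (i : ι) (hiso : IsPartialIso μ E (Adom i) (f i)) :
    ∃ S' θ', IsPiece μ E Adom f S' θ' ∧ S' ⊆ A ∧ θ' '' S' ⊆ Yᶜ ∧ S ⊆ S' ∧
      θ '' S ⊆ θ' '' S' ∧ (A \ S') ∩ Adom i ⊆ f i ⁻¹' (Y ∪ θ' '' S') := by
  classical
  set P := (A \ S) ∩ Adom i ∩ f i ⁻¹' (Y ∪ θ '' S)ᶜ
  have hPm : MeasurableSet P := ((hA.diff hθ.1.measurableSet).inter hiso.measurableSet).inter
    (hiso.measurable (hY.union hθ.1.measurableSet_image_self).compl)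
  have hdom : Disjoint S P := Set.disjoint_left.mpr fun x hxS hxP => hxP.1.1.2 hxS
  have himg : Disjoint (θ '' S) (f i '' P) :=
    Set.disjoint_left.mpr fun _ hy ⟨_, hxP, hxy⟩ => hxP.2 (hxy ▸ Or.inr hy)
  have hθ' : Set.EqOn (P.piecewise (f i) θ) θ S := fun x hx =>
    Set.piecewise_eq_of_notMem _ _ _ (Set.disjoint_left.mp hdom hx)
  have himage : P.piecewise (f i) θ '' (S ∪ P) = θ '' S ∪ f i '' P := by
    rw [Set.image_union, hθ'.image_eq, (Set.piecewise_eqOn _ _ _).image_eq]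
  refine ⟨S ∪ P, P.piecewise (f i) θ, hθ.piecewise i hiso (Set.inter_subset_left.trans
    Set.inter_subset_right) hPm hdom himg, Set.union_subset hSA fun x hx => hx.1.1.1, ?_,
    Set.subset_union_left, himage ▸ Set.subset_union_left, ?_⟩
  · rw [himage]
    exact Set.union_subset hθY fun _ ⟨_, hxP, hxy⟩ hy => hxP.2 (hxy ▸ Or.inl hy)
  · rintro x ⟨⟨hxA, hxSP⟩, hxi⟩
    by_contra hx
    have hxP : x ∈ P := ⟨⟨⟨hxA, fun hxS => hxSP (Or.inl hxS)⟩, hxi⟩,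
      fun h => hx (himage ▸ h.imp_right Or.inl)⟩
    exact hxSP (Or.inr hxP)

theorem exists_maximal_piece [Fintype ι] (hiso : ∀ i, IsPartialIso μ E (Adom i) (f i))
    {A Y : Set X} (hA : MeasurableSet A) (hY : MeasurableSet Y) :
    ∃ S θ, IsPiece μ E Adom f S θ ∧ S ⊆ A ∧ θ '' S ⊆ Yᶜ ∧
      ∀ i, (A \ S) ∩ Adom i ⊆ f i ⁻¹' (Y ∪ θ '' S) := by
  classical
  suffices ∀ s : Finset ι, ∃ S θ, IsPiece μ E Adom f S θ ∧ S ⊆ A ∧ θ '' S ⊆ Yᶜ ∧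
      ∀ i ∈ s, (A \ S) ∩ Adom i ⊆ f i ⁻¹' (Y ∪ θ '' S) by
    obtain ⟨S, θ, hθ, hSA, hθY, hmax⟩ := this Finset.univ
    exact ⟨S, θ, hθ, hSA, hθY, fun i => hmax i (Finset.mem_univ i)⟩
  intro s
  induction s using Finset.induction_on with
  | empty =>
    exact ⟨∅, id, ⟨⟨.empty, measurable_id, by simp, by simp, by simp, by simp⟩, by simp⟩,
      Set.empty_subset A, by simp, by simp⟩
  | insert i s _ ih =>
    obtain ⟨S, θ, hθ, hSA, hθY, hmax⟩ := ih
    obtain ⟨S', θ', hθ', hS'A, hθ'Y, hSS', himg, hmaxi⟩ := hθ.exists_extend hA hY hSA hθY i (hiso i)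
    refine ⟨S', θ', hθ', hS'A, hθ'Y, (Finset.forall_mem_insert _ _ _).mpr ⟨hmaxi, fun j hj => ?_⟩⟩
    exact (Set.inter_subset_inter_left _ (Set.sdiff_subset_sdiff_right hSS')).trans
      ((hmax j hj).trans (Set.preimage_mono (Set.union_subset_union_right Y himg)))

end Greedy

theorem sum_indicator_add_one_le {X ι : Type*} [Fintype ι] {K G : ι → Set X}
    (hKG : ∀ i, K i ⊆ G i) {i₀ : ι} {y : X} (hyG : y ∈ G i₀) (hyK : y ∉ K i₀) :
    ∑ i, (K i).indicator (fun _ => (1 : ℝ≥0∞)) y + 1 ≤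
      ∑ i, (G i).indicator (fun _ => (1 : ℝ≥0∞)) y := by
  classical
  rw [← Finset.add_sum_erase _ _ (Finset.mem_univ i₀),
    ← Finset.add_sum_erase _ _ (Finset.mem_univ i₀), Set.indicator_of_notMem hyK,
    Set.indicator_of_mem hyG, zero_add, add_comm]
  gcongr with i
  exact hKG i

section Counting

variable {X ι : Type*} [MeasurableSpace X] {μ : Measure X} [Fintype ι] {G : ι → Set X}

theorem sum_measure_inter_eq_setLIntegral (hG : ∀ i, MeasurableSet (G i)) (W : Set X) :
    ∑ i, μ (G i ∩ W) = ∫⁻ x in W, ∑ i, (G i).indicator (fun _ => (1 : ℝ≥0∞)) x ∂μ := by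
  rw [lintegral_finsetSum _ fun i _ => measurable_const.indicator (hG i)]
  refine Finset.sum_congr rfl fun i _ => ?_
  rw [lintegral_indicator (hG i), setLIntegral_const, one_mul, Measure.restrict_apply (hG i)]

theorem sum_measure_inter_eq_of_ae_sum_indicator_eq (hG : ∀ i, MeasurableSet (G i))
    {c : ℝ≥0∞} (h : ∀ᵐ x ∂μ, ∑ i, (G i).indicator (fun _ => (1 : ℝ≥0∞)) x = c) (W : Set X) :
    ∑ i, μ (G i ∩ W) = c * μ W := by
  rw [sum_measure_inter_eq_setLIntegral hG, lintegral_congr_ae (ae_restrict_of_ae h),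
    setLIntegral_const]

theorem sum_measure_inter_le_of_ae_sum_indicator_le (hG : ∀ i, MeasurableSet (G i))
    {W : Set X} (hW : MeasurableSet W) {c : ℝ≥0∞}
    (h : ∀ᵐ x ∂μ, x ∈ W → ∑ i, (G i).indicator (fun _ => (1 : ℝ≥0∞)) x ≤ c) :
    ∑ i, μ (G i ∩ W) ≤ c * μ W := by
  rw [sum_measure_inter_eq_setLIntegral hG, ← setLIntegral_const]
  exact lintegral_mono_ae ((ae_restrict_iff' hW).mpr h)

end Counting

section MaximalPiece

variable {X ι : Type*} [MeasurableSpace X] [StandardBorelSpace X] [Fintype ι] {μ : Measure X}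
  {E : Set (X × X)} {n : ℕ} {Adom : ι → Set X} {f : ι → X → X}

theorem sum_measure_image_inter_le (hiso : ∀ i, IsPartialIso μ E (Adom i) (f i))
    (hcol : ∀ᵐ y ∂μ, ∑ i, (f i '' Adom i).indicator (fun _ => (1 : ℝ≥0∞)) y = (n : ℝ≥0∞))
    {C R : Set X} {θ : X → X} (hθ : IsPiece μ E Adom f C θ) (hR : MeasurableSet R)
    (hRC : Disjoint R C) :
    ∑ i, μ (f i '' (Adom i ∩ R) ∩ θ '' C) ≤ ((n : ℝ≥0∞) - 1) * μ C := by
  rw [← hθ.1.measure_image]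
  refine sum_measure_inter_le_of_ae_sum_indicator_le
    (fun i => (hiso i).measurableSet_image Set.inter_subset_left ((hiso i).measurableSet.inter hR))
    hθ.1.measurableSet_image_self ?_
  filter_upwards [hcol] with y hy ⟨c, hcC, hcy⟩
  obtain ⟨i₀, hci₀, hfc⟩ := hθ.2 c hcC
  have hyR : y ∉ f i₀ '' (Adom i₀ ∩ R) := by
    rintro ⟨x, ⟨hxi, hxR⟩, hxy⟩
    have hxc : x = c := (hiso i₀).injOn hxi hci₀ (hxy.trans (hfc.trans hcy).symm)
    exact Set.disjoint_left.mp hRC (hxc ▸ hxR) hcC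
  refine ENNReal.le_sub_of_add_le_right ENNReal.one_ne_top (hy ▸ ?_)
  exact sum_indicator_add_one_le (fun i => Set.image_mono Set.inter_subset_left)
    ⟨c, hci₀, hfc.trans hcy⟩ hyR

theorem mul_measure_le_of_maximal_piece (hiso : ∀ i, IsPartialIso μ E (Adom i) (f i))
    (hrow : ∀ᵐ x ∂μ, ∑ i, (Adom i).indicator (fun _ => (1 : ℝ≥0∞)) x = (n : ℝ≥0∞))
    (hcol : ∀ᵐ y ∂μ, ∑ i, (f i '' Adom i).indicator (fun _ => (1 : ℝ≥0∞)) y = (n : ℝ≥0∞))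
    {A B C S : Set X} {θ θ₁ : X → X} (hA : MeasurableSet A) (hθ : IsPiece μ E Adom f C θ)
    (hAC : Disjoint A C) (hθ₁ : IsPiece μ E Adom f S θ₁)
    (hmax : ∀ i, (A \ S) ∩ Adom i ⊆ f i ⁻¹' (B ∪ θ '' C ∪ θ₁ '' S)) :
    n * μ A ≤ ((n : ℝ≥0∞) - 1) * μ C + n * μ B + 2 * n * μ S := by
  have hR : MeasurableSet (A \ S) := hA.diff hθ₁.1.measurableSet
  have hsplit : ∀ i, μ (Adom i ∩ (A \ S)) ≤
      μ (f i '' (Adom i ∩ (A \ S)) ∩ θ '' C) + μ (f i '' Adom i ∩ (B ∪ θ₁ '' S)) := by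
    intro i
    rw [← (hiso i).measure_image_of_subset Set.inter_subset_left
      ((hiso i).measurableSet.inter hR)]
    refine (measure_mono ?_).trans (measure_union_le _ _)
    rintro _ ⟨x, hx, rfl⟩
    rcases hmax i ⟨hx.2, hx.1⟩ with (hxB | hxD) | hxT
    · exact Or.inr ⟨⟨x, hx.1, rfl⟩, Or.inl hxB⟩
    · exact Or.inl ⟨⟨x, hx, rfl⟩, hxD⟩
    · exact Or.inr ⟨⟨x, hx.1, rfl⟩, Or.inr hxT⟩
  have hrest : n * μ (A \ S) ≤ ((n : ℝ≥0∞) - 1) * μ C + n * μ B + n * μ S := calc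
    n * μ (A \ S) = ∑ i, μ (Adom i ∩ (A \ S)) :=
      (sum_measure_inter_eq_of_ae_sum_indicator_eq (fun i => (hiso i).measurableSet) hrow _).symm
    _ ≤ ∑ i, (μ (f i '' (Adom i ∩ (A \ S)) ∩ θ '' C) + μ (f i '' Adom i ∩ (B ∪ θ₁ '' S))) :=
      Finset.sum_le_sum fun i _ => hsplit i
    _ ≤ ((n : ℝ≥0∞) - 1) * μ C + n * μ (B ∪ θ₁ '' S) := by
      rw [Finset.sum_add_distrib]
      exact add_le_add (sum_measure_image_inter_le hiso hcol hθ hR (hAC.mono_left Set.sdiff_subset))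
        (sum_measure_inter_eq_of_ae_sum_indicator_eq
          (fun i => (hiso i).measurableSet_image_self) hcol _).le
    _ ≤ ((n : ℝ≥0∞) - 1) * μ C + n * (μ B + μ S) := by
      gcongr
      exact hθ₁.1.measure_image ▸ measure_union_le _ _
    _ = ((n : ℝ≥0∞) - 1) * μ C + n * μ B + n * μ S := by ring
  calc n * μ A ≤ n * μ (A \ S) + n * μ S := by
        rw [← mul_add]
        gcongr
        exact (measure_mono (Set.subset_sdiff_union A S)).trans (measure_union_le _ _)
    _ ≤ ((n : ℝ≥0∞) - 1) * μ C + n * μ B + n * μ S + n * μ S := by gcongr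
    _ = ((n : ℝ≥0∞) - 1) * μ C + n * μ B + 2 * n * μ S := by ring

end MaximalPiece

theorem ENNReal.sub_div_two_sub_le_of_mul_le {N a b c s : ℝ≥0∞} (hN0 : N ≠ 0) (hNt : N ≠ ∞)
    (h : N * a ≤ (N - 1) * c + N * b + 2 * N * s) :
    (a - b) / 2 - (N - 1) / (2 * N) * c ≤ s := by
  have key : 2 * N * ((N - 1) / (2 * N) * c) = (N - 1) * c := by
    rw [← mul_assoc, ENNReal.mul_div_cancel (by simp [hN0]) (ENNReal.mul_ne_top (by simp) hNt)]
  rw [tsub_le_iff_right, ENNReal.div_le_iff two_ne_zero ENNReal.ofNat_ne_top, tsub_le_iff_right,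
    ← ENNReal.mul_le_mul_iff_right hN0 hNt]
  calc N * a ≤ (N - 1) * c + N * b + 2 * N * s := h
    _ = N * ((s + (N - 1) / (2 * N) * c) * 2 + b) := by rw [← key]; ring

theorem piece_extension_lemma_general
    {X : Type*} [MeasurableSpace X] [StandardBorelSpace X]
    (μ : Measure X)
    (E : Set (X × X))
    (m n : ℕ) (hn : 1 ≤ n) (Adom : Fin m → Set X) (f : Fin m → X → X)
    (hiso : ∀ i, IsPartialIso μ E (Adom i) (f i))
    (hrow : ∀ᵐ x ∂μ, ∑ i : Fin m, (Adom i).indicator (fun _ => (1 : ℝ≥0∞)) x = (n : ℝ≥0∞))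
    (hcol : ∀ᵐ y ∂μ, ∑ i : Fin m,
      (f i '' Adom i).indicator (fun _ => (1 : ℝ≥0∞)) y = (n : ℝ≥0∞))
    (A B : Set X) (hA : MeasurableSet A) (hB : MeasurableSet B)
    (C : Set X) (θ : X → X)
    (hθ : IsPartialIso μ E C θ)
    (hθH : ∀ x ∈ C, ∃ i, x ∈ Adom i ∧ f i x = θ x)
    (hAC : A ∩ C = ∅) :
    ∃ (S : Set X) (θ₁ : X → X),
      IsPartialIso μ E S θ₁ ∧
      (∀ x ∈ S, ∃ i, x ∈ Adom i ∧ f i x = θ₁ x) ∧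
      S ⊆ A ∧ (θ₁ '' S) ⊆ (B ∪ θ '' C)ᶜ ∧
      (μ A - μ B) / 2 - (((n : ℝ≥0∞) - 1) / (2 * n)) * μ C ≤ μ S := by
  obtain ⟨S, θ₁, hθ₁, hSA, hθ₁Y, hmax⟩ :=
    exists_maximal_piece hiso hA (hB.union hθ.measurableSet_image_self)
  have hcount := mul_measure_le_of_maximal_piece hiso hrow hcol hA ⟨hθ, hθH⟩
    (Set.disjoint_iff_inter_eq_empty.mpr hAC) hθ₁ hmax
  exact ⟨S, θ₁, hθ₁.1, hθ₁.2, hSA, hθ₁Y, ENNReal.sub_div_two_sub_le_of_mul_le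
    (Nat.cast_ne_zero.mpr (Nat.one_le_iff_ne_zero.mp hn)) (ENNReal.natCast_ne_top n) hcount⟩

/-- Let `Φ = {φ_i : A_i → B_i}` be a DSE of multiplicity `n` with support
`H = ⋃_i graph φ_i`. Let `A, B ⊆ X` and let `θ : C → D` be a piece (partial isomorphism
with graph in `H`) with `A ∩ C = ∅` and `B ∩ D = ∅`. Then there is a piece `θ₁ : S → T`
with `S ⊆ A`, `T ⊆ (B ∪ D)ᶜ` and `μ(S) ≥ (μ(A) − μ(B))/2 − ((n−1)/(2n))·μ(C)`. -/
theorem piece_extension_lemma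
    {X : Type*} [MeasurableSpace X] [StandardBorelSpace X]
    (μ : Measure X) [IsProbabilityMeasure μ]
    (E : Set (X × X)) (hE : Equivalence fun x y => (x, y) ∈ E)
    (hcnt : ∀ x, {y | (x, y) ∈ E}.Countable)
    (m n : ℕ) (hn : 1 ≤ n) (Adom : Fin m → Set X) (f : Fin m → X → X)
    (hiso : ∀ i, IsPartialIso μ E (Adom i) (f i))
    (hrow : ∀ᵐ x ∂μ, ∑ i : Fin m, (Adom i).indicator (fun _ => (1 : ℝ≥0∞)) x = (n : ℝ≥0∞))
    (hcol : ∀ᵐ y ∂μ, ∑ i : Fin m,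
      (f i '' Adom i).indicator (fun _ => (1 : ℝ≥0∞)) y = (n : ℝ≥0∞))
    (A B : Set X) (hA : MeasurableSet A) (hB : MeasurableSet B)
    (C : Set X) (θ : X → X)
    (hθ : IsPartialIso μ E C θ)
    (hθH : ∀ x ∈ C, ∃ i, x ∈ Adom i ∧ f i x = θ x)
    (hAC : A ∩ C = ∅) (hBD : B ∩ (θ '' C) = ∅) :
    ∃ (S : Set X) (θ₁ : X → X),
      IsPartialIso μ E S θ₁ ∧
      (∀ x ∈ S, ∃ i, x ∈ Adom i ∧ f i x = θ₁ x) ∧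
      S ⊆ A ∧ (θ₁ '' S) ⊆ (B ∪ θ '' C)ᶜ ∧
      (μ A - μ B) / 2 - (((n : ℝ≥0∞) - 1) / (2 * n)) * μ C ≤ μ S :=
  piece_extension_lemma_general μ E m n hn Adom f hiso hrow hcol A B hA hB C θ hθ hθH hAC
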